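/- arXiv:2409.00908 — 4 statements merged into one kernel-verified Lean document; each statement's English description precedes it below -/
import Mathlib

section
/- Let φ: ℝ → ℝ be convex, differentiable at 0 with φ'(0) < 0, and differentiable on (0,∞). Suppose there is a continuous function g: [z₀,∞) → (0,∞) with z₀ > 0 such that ∫_{z₀}^∞ g(z) dz converges and z ↦ φ'(z)/g(z) is nondecreasing on [z₀,∞). Then φ is bounded below on ℝ. -/
/-!
To the left of `z₀` the tangent line at `0`, whose slope is negative, bounds `φ` from below.
To the right, `φ' z / g z ≥ φ' z₀ / g z₀ =: r` gives `φ' ≥ r g`, so `φ x - φ z₀ = ∫_{z₀}^x φ'` is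
bounded below by `min r 0 * ∫_{z₀}^∞ g`.
-/

open Set MeasureTheory

theorem ConvexOn.add_mul_sub_le_of_hasDerivAt {S : Set ℝ} {f : ℝ → ℝ} {a x m : ℝ}
    (hf : ConvexOn ℝ S f) (ha : a ∈ S) (hx : x ∈ S) (hfa : HasDerivAt f m a) :
    f a + m * (x - a) ≤ f x := by
  rcases lt_trichotomy a x with hax | rfl | hxa
  · have hslope := hf.le_slope_of_hasDerivAt ha hx hax hfa
    rw [slope_def_field, le_div_iff₀ (sub_pos.2 hax)] at hslope
    linarith
  · simp
  · have hslope := hf.slope_le_of_hasDerivAt hx ha hxa hfa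
    rw [slope_def_field, div_le_iff₀ (sub_pos.2 hxa)] at hslope
    linarith

theorem ConvexOn.bddBelow_image_Iic_of_hasDerivAt_nonpos {f : ℝ → ℝ} {a m : ℝ}
    (hf : ConvexOn ℝ univ f) (hfa : HasDerivAt f m a) (hm : m ≤ 0) (b : ℝ) :
    BddBelow (f '' Iic b) := by
  refine ⟨f a + m * (b - a), ?_⟩
  rintro _ ⟨x, hxb, rfl⟩
  calc f a + m * (b - a) ≤ f a + m * (x - a) := by nlinarith [mem_Iic.1 hxb]
    _ ≤ f x := hf.add_mul_sub_le_of_hasDerivAt (mem_univ a) (mem_univ x) hfa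

theorem bddBelow_image_Ici_of_mul_le_deriv {f f' g : ℝ → ℝ} {a r : ℝ}
    (hf : ∀ x ∈ Ici a, HasDerivAt f (f' x) x) (hg : IntegrableOn g (Ici a))
    (hg_nonneg : ∀ x ∈ Ici a, 0 ≤ g x) (hr : ∀ x ∈ Ici a, r * g x ≤ f' x) :
    BddBelow (f '' Ici a) := by
  -- With a nonpositive multiplier, the partial integrals of `g` may be replaced by the total one.
  set r' := min r 0
  refine ⟨f a + r' * ∫ t in Ici a, g t, ?_⟩
  rintro _ ⟨x, hax, rfl⟩
  have hIcc : Icc a x ⊆ Ici a := Icc_subset_Ici_self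
  have hftc : ∫ t in a..x, r' * g t ≤ f x - f a :=
    intervalIntegral.integral_le_sub_of_hasDeriv_right_of_le hax
      (fun t ht => (hf t (hIcc ht)).continuousAt.continuousWithinAt)
      (fun t ht => (hf t (hIcc (Ioo_subset_Icc_self ht))).hasDerivWithinAt)
      ((hg.mono_set hIcc).const_mul r')
      (fun t ht => by
        have ht' := hIcc (Ioo_subset_Icc_self ht)
        nlinarith [min_le_left r 0, hg_nonneg t ht', hr t ht'])
  have hpartial : ∫ t in a..x, g t ≤ ∫ t in Ici a, g t := by
    rw [intervalIntegral.integral_of_le hax]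
    exact setIntegral_mono_set hg
      ((ae_restrict_iff' measurableSet_Ici).2 (Filter.Eventually.of_forall hg_nonneg))
      (Filter.Eventually.of_forall fun t ht => mem_Ici.2 ht.1.le)
  calc f a + r' * ∫ t in Ici a, g t ≤ f a + r' * ∫ t in a..x, g t :=
        add_le_add_right (mul_le_mul_of_nonpos_left hpartial (min_le_right r 0)) _
    _ = f a + ∫ t in a..x, r' * g t := by rw [intervalIntegral.integral_const_mul]
    _ ≤ f x := by linarith

theorem superlinear_raising_tail_bddBelow_general (φ φ' g : ℝ → ℝ)
    (hφ : ConvexOn ℝ Set.univ φ)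
    (d : ℝ) (hd : HasDerivAt φ d 0) (hneg : d < 0)
    (hdiff : ∀ z : ℝ, 0 < z → HasDerivAt φ (φ' z) z)
    (z₀ : ℝ) (hz₀ : 0 < z₀)
    (hgpos : ∀ z ∈ Ici z₀, 0 < g z)
    (hgint : IntegrableOn g (Ici z₀) volume)
    (hmono : ∀ a b : ℝ, z₀ ≤ a → a ≤ b → φ' a / g a ≤ φ' b / g b) :
    BddBelow (Set.range φ) := by
  have htail : ∀ z ∈ Ici z₀, φ' z₀ / g z₀ * g z ≤ φ' z := fun z hz => by
    have hgz := hgpos z hz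
    calc φ' z₀ / g z₀ * g z ≤ φ' z / g z * g z := by
          gcongr ?_ * _
          exact hmono z₀ z le_rfl hz
      _ = φ' z := div_mul_cancel₀ _ hgz.ne'
  rw [← image_univ, ← Iic_union_Ici (a := z₀), image_union]
  exact (hφ.bddBelow_image_Iic_of_hasDerivAt_nonpos hd hneg.le z₀).union
    (bddBelow_image_Ici_of_mul_le_deriv (fun z hz => hdiff z (hz₀.trans_le hz)) hgint
      (fun z hz => (hgpos z hz).le) htail)

theorem superlinear_raising_tail_bddBelow (φ φ' g : ℝ → ℝ)
    (hφ : ConvexOn ℝ Set.univ φ)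
    (d : ℝ) (hd : HasDerivAt φ d 0) (hneg : d < 0)
    (hdiff : ∀ z : ℝ, 0 < z → HasDerivAt φ (φ' z) z)
    (z₀ : ℝ) (hz₀ : 0 < z₀)
    (hgcont : ContinuousOn g (Ici z₀))
    (hgpos : ∀ z ∈ Ici z₀, 0 < g z)
    (hgint : IntegrableOn g (Ici z₀) volume)
    (hmono : ∀ a b : ℝ, z₀ ≤ a → a ≤ b → φ' a / g a ≤ φ' b / g b) :
    BddBelow (Set.range φ) :=
  superlinear_raising_tail_bddBelow_general φ φ' g hφ d hd hneg hdiff z₀ hz₀ hgpos hgint hmono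
end

section
/- Given real numbers z₁ < z₂ < ⋯ < z_{B} (with some index b₀ such that z_{b₀} = 0) and reals g₁ ≤ g₂ ≤ ⋯ ≤ g_{B} with g_{b₀} < 0, there exists a convex function φ: ℝ → ℝ that is bounded below, differentiable at 0 with φ'(0) = g_{b₀} < 0, and such that g_i is a subgradient of φ at z_i for every i. -/
/-!
Interpolate the data by a continuous nondecreasing σ with σ (z i) = g i that is nonnegative
somewhere, and take φ w = ∫₀ʷ σ. Then φ' = σ is monotone, so φ is convex, and monotonicity of σ
gives φ w ≥ φ x + σ x * (w - x) for all x, w. At x = z i this is the subgradient claim; combined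
at x = 0, where σ = g b₀ < 0, and at a point where σ ≥ 0, it bounds φ below.
-/

open Set Finset

theorem bddBelow_range_of_subgradients {f : ℝ → ℝ} {x₀ x₁ s₀ s₁ : ℝ} (hs₀ : s₀ ≤ 0)
    (hs₁ : 0 ≤ s₁) (h₀ : ∀ w, f x₀ + s₀ * (w - x₀) ≤ f w)
    (h₁ : ∀ w, f x₁ + s₁ * (w - x₁) ≤ f w) : BddBelow (range f) := by
  refine ⟨min (f x₀ + s₀ * (x₁ - x₀)) (f x₁), ?_⟩
  rintro _ ⟨w, rfl⟩
  rcases le_total w x₁ with hw | hw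
  · exact (min_le_left _ _).trans <| le_trans (by nlinarith) (h₀ w)
  · exact (min_le_right _ _).trans <| le_trans (by nlinarith) (h₁ w)

section Antiderivative

variable {σ : ℝ → ℝ}

theorem Monotone.intervalIntegral_add_mul_sub_le (hσ : Monotone σ) (a x w : ℝ) :
    (∫ t in a..x, σ t) + σ x * (w - x) ≤ ∫ t in a..w, σ t := by
  have hint : ∀ b c, IntervalIntegrable σ MeasureTheory.volume b c :=
    fun _ _ => hσ.intervalIntegrable
  suffices σ x * (w - x) ≤ ∫ t in x..w, σ t by
    linarith [intervalIntegral.integral_interval_sub_left (hint a w) (hint a x)]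
  rcases le_total x w with hxw | hwx
  · calc σ x * (w - x) = ∫ _ in x..w, σ x := by simp [mul_comm]
      _ ≤ ∫ t in x..w, σ t :=
        intervalIntegral.integral_mono_on hxw intervalIntegrable_const (hint x w)
          fun t ht => hσ ht.1
  · calc σ x * (w - x) = -∫ _ in w..x, σ x := by simp; ring
      _ ≤ -∫ t in w..x, σ t := by
        gcongr
        exact intervalIntegral.integral_mono_on hwx (hint w x) intervalIntegrable_const
          fun t ht => hσ ht.2
      _ = ∫ t in x..w, σ t := (intervalIntegral.integral_symm _ _).symm

theorem Continuous.convexOn_intervalIntegral (hσ : Continuous σ) (hmono : Monotone σ) (a : ℝ) :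
    ConvexOn ℝ univ (fun w => ∫ t in a..w, σ t) := by
  refine Monotone.convexOn_univ_of_deriv
    (fun x => (hσ.integral_hasStrictDerivAt a x).hasDerivAt.differentiableAt) ?_
  rwa [show deriv (fun w => ∫ t in a..w, σ t) = σ from funext (hσ.deriv_integral σ a)]

end Antiderivative

section Interpolation

variable {ι : Type*} [Fintype ι] [LinearOrder ι] {z g : ι → ℝ}

theorem exists_slope_bound (hz : StrictMono z) :
    ∃ S, 0 ≤ S ∧ ∀ k i, k < i → g i - g k ≤ S * (z i - z k) := by
  obtain ⟨S, hS⟩ :=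
    (Set.finite_range fun p : ι × ι => (g p.2 - g p.1) / (z p.2 - z p.1)).bddAbove
  refine ⟨max S 0, le_max_right _ _, fun k i hki => ?_⟩
  rw [← div_le_iff₀ (sub_pos.2 (hz hki))]
  exact (hS ⟨(k, i), rfl⟩).trans (le_max_left _ _)

theorem exists_continuous_monotone_interpolation [Nonempty ι] (hz : StrictMono z)
    (hg : Monotone g) :
    ∃ σ : ℝ → ℝ, Continuous σ ∧ Monotone σ ∧ (∀ i, σ (z i) = g i) ∧ ∃ T, 0 ≤ σ T := by
  obtain ⟨S, hS0, hS⟩ := exists_slope_bound (g := g) hz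
  obtain ⟨T, hT⟩ := (Set.finite_range fun i => z i - g i).bddAbove
  set ramps : ℝ → ℝ := fun t => univ.sup' univ_nonempty fun i => g i - S * max (z i - t) 0
  -- Since `S` dominates every slope of the data, the ramp through `(z i, g i)` stays below `g k`
  -- at each earlier `z k`.
  have ramps_apply (k : ι) : ramps (z k) = g k := by
    refine le_antisymm (Finset.sup'_le _ _ fun i _ => ?_)
      (Finset.le_sup'_of_le _ (mem_univ k) (by simp))
    rcases le_or_gt i k with hik | hki
    · nlinarith [hg hik, le_max_right (z i - z k) 0]
    · rw [max_eq_left (sub_nonneg.2 (hz hki).le)]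
      linarith [hS k i hki]
  refine ⟨fun t => max (t - T) (ramps t), ?_, ?_, fun k => ?_, T, by simp⟩
  · exact (continuous_id.sub continuous_const).max
      (Continuous.finset_sup'_apply _ fun i _ => by fun_prop)
  · intro a b hab
    refine max_le_max (by linarith) (Finset.sup'_mono_fun fun i _ => ?_)
    gcongr
  · simp only [ramps_apply]
    exact max_eq_right (by linarith [hT ⟨k, rfl⟩])

end Interpolation

theorem exists_bcc_loss_matching_derivatives (B : ℕ) (z g : Fin B → ℝ)
    (hz : StrictMono z) (b₀ : Fin B) (hz0 : z b₀ = 0)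
    (hg : Monotone g) (hgneg : g b₀ < 0) :
    ∃ φ : ℝ → ℝ, ConvexOn ℝ Set.univ φ ∧ BddBelow (Set.range φ) ∧
      HasDerivAt φ (g b₀) 0 ∧
      ∀ i : Fin B, ∀ w : ℝ, φ w ≥ φ (z i) + g i * (w - z i) := by
  have : Nonempty (Fin B) := ⟨b₀⟩
  obtain ⟨σ, hσc, hσm, hσz, T, hT⟩ := exists_continuous_monotone_interpolation hz hg
  have hσ0 : σ 0 = g b₀ := hz0 ▸ hσz b₀
  have hsub := hσm.intervalIntegral_add_mul_sub_le 0
  refine ⟨fun w => ∫ t in (0 : ℝ)..w, σ t, hσc.convexOn_intervalIntegral hσm 0,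
    bddBelow_range_of_subgradients (hσ0 ▸ hgneg.le) hT (hsub 0) (hsub T), ?_, fun i w => ?_⟩
  · exact hσ0 ▸ (hσc.integral_hasStrictDerivAt 0 0).hasDerivAt
  · simpa only [hσz i] using hsub (z i) w
end

section
/- Let φ: ℝ → ℝ be convex with a negative subgradient at 0 (i.e., some g ∈ ∂φ(0) with g < 0), and let η ∈ [0,1] with η ≠ 1/2. Then H⁻_φ(η) := inf{ η φ(α) + (1−η) φ(−α) : α(2η−1) ≤ 0 } = φ(0). -/
/-! Averaging the affine minorant `φ 0 + g z` of `φ` at `α` and `-α` with weights `η` and `1 - η`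
bounds `η φ α + (1 - η) φ (-α)` below by `φ 0 + g (2η - 1) α`, which is at
least `φ 0` on the half-line where `(2η - 1) α ≤ 0`; the value `φ 0` is attained at `α = 0`. -/

lemma le_convex_combination_of_affine_minorant {φ : ℝ → ℝ} {c g : ℝ}
    (hsub : ∀ z, φ c + g * (z - c) ≤ φ z) {η : ℝ} (h₀ : 0 ≤ η) (h₁ : η ≤ 1) (a b : ℝ) :
    φ c + g * (η * a + (1 - η) * b - c) ≤ η * φ a + (1 - η) * φ b := by
  linear_combination η * hsub a + (1 - η) * hsub b

theorem Hminus_eq_phi_zero_general (φ : ℝ → ℝ)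
    (g : ℝ) (hg : g < 0) (hsub : ∀ z : ℝ, φ z ≥ φ 0 + g * (z - 0))
    (η : ℝ) (hη : η ∈ Set.Icc (0 : ℝ) 1) :
    sInf ((fun α => η * φ α + (1 - η) * φ (-α)) '' {α : ℝ | α * (2 * η - 1) ≤ 0})
      = φ 0 := by
  refine IsLeast.csInf_eq ⟨⟨0, by simp, by simp only [neg_zero]; ring⟩, ?_⟩
  rintro _ ⟨α, hα, rfl⟩
  have hmix := le_convex_combination_of_affine_minorant hsub hη.1 hη.2 α (-α)
  linear_combination hmix + mul_nonneg_of_nonpos_of_nonpos hg.le hα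

theorem Hminus_eq_phi_zero (φ : ℝ → ℝ) (hφ : ConvexOn ℝ Set.univ φ)
    (g : ℝ) (hg : g < 0) (hsub : ∀ z : ℝ, φ z ≥ φ 0 + g * (z - 0))
    (η : ℝ) (hη : η ∈ Set.Icc (0 : ℝ) 1) (hne : η ≠ 1 / 2) :
    sInf ((fun α => η * φ α + (1 - η) * φ (-α)) '' {α : ℝ | α * (2 * η - 1) ≤ 0})
      = φ 0 :=
  Hminus_eq_phi_zero_general φ g hg hsub η hη
end

section
/- Let φ(z) = π₁ exp(−z) + π₂ log(1 + exp(−2z)) with π₁, π₂ > 0, π₁ + π₂ = 1. Define ψ(θ) = π₁(1 − √(1 − θ²)) + (π₂/2)((1−θ)log(1−θ) + (1+θ)log(1+θ)) for θ ∈ [0,1]. Then ψ(θ) ≥ ((2π₁ + π₂)/4) θ² for all θ ∈ [0,1]. -/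
/-!
The square-root term satisfies `1 - √(1 - θ²) ≥ θ² / 2`, and the entropy term satisfies
`(1 - θ) log (1 - θ) + (1 + θ) log (1 + θ) = ∑ₙ θ^(2n+2) / ((2n+1)(n+1)) ≥ θ²`, all terms of the
series being nonnegative. Weighting by `π₁` and `π₂ / 2` gives `(π₁ / 2 + π₂ / 2) θ²`, which is
at least `(2π₁ + π₂) / 4 · θ²`.
-/

open Real

theorem sqrt_one_sub_le_one_sub_half {x : ℝ} (hx : x ≤ 2) : √(1 - x) ≤ 1 - x / 2 :=
  sqrt_le_iff.mpr ⟨by linarith, by nlinarith [sq_nonneg x]⟩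

/-- The left side is `θ (log (1 + θ) - log (1 - θ)) + log (1 - θ²)`; the two logarithmic series
combine term by term through `2 / (2n + 1) - 1 / (n + 1) = 1 / ((2n + 1)(n + 1))`. -/
theorem hasSum_mul_log_one_sub_add_mul_log_one_add {θ : ℝ} (hθ : |θ| < 1) :
    HasSum (fun n : ℕ => (θ ^ 2) ^ (n + 1) / ((2 * n + 1) * (n + 1)))
      ((1 - θ) * log (1 - θ) + (1 + θ) * log (1 + θ)) := by
  have hθ2 : |θ ^ 2| < 1 := by
    rw [abs_pow]; exact pow_lt_one₀ (abs_nonneg θ) hθ two_ne_zero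
  have hlog_mul : log (1 - θ ^ 2) = log (1 - θ) + log (1 + θ) := by
    obtain ⟨hl, hr⟩ := abs_lt.mp hθ
    rw [← log_mul (by linarith) (by linarith)]; ring_nf
  have h := ((hasSum_log_sub_log_of_abs_lt_one hθ).mul_left θ).add
    (hasSum_pow_div_log_of_abs_lt_one hθ2).neg
  have hterm : (fun n : ℕ => (θ ^ 2) ^ (n + 1) / ((2 * n + 1) * (n + 1))) =
      fun n : ℕ => θ * (2 * (1 / (2 * n + 1)) * θ ^ (2 * n + 1)) +
        -((θ ^ 2) ^ (n + 1) / (n + 1)) := by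
    funext n
    field_simp
    ring
  have hvalue : (1 - θ) * log (1 - θ) + (1 + θ) * log (1 + θ) =
      θ * (log (1 + θ) - log (1 - θ)) + - -log (1 - θ ^ 2) := by
    rw [neg_neg, hlog_mul]; ring
  rwa [hterm, hvalue]

theorem sq_le_mul_log_one_sub_add_mul_log_one_add {θ : ℝ} (hθ : |θ| ≤ 1) :
    θ ^ 2 ≤ (1 - θ) * log (1 - θ) + (1 + θ) * log (1 + θ) := by
  rcases hθ.lt_or_eq with hθ | hθ
  · simpa using le_hasSum (hasSum_mul_log_one_sub_add_mul_log_one_add hθ) 0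
      fun n _ => by positivity
  · have : 1 / 2 < log 2 := by linarith [log_two_gt_d9]
    rcases (abs_eq zero_le_one).mp hθ with rfl | rfl <;> norm_num <;> linarith

theorem psi_quadratic_lower_bound_general (π₁ π₂ : ℝ) (h1 : 0 < π₁) (h2 : 0 < π₂)
    (θ : ℝ) (hθ : θ ∈ Set.Icc (0 : ℝ) 1) :
    π₁ * (1 - Real.sqrt (1 - θ ^ 2)) +
      π₂ / 2 * ((1 - θ) * Real.log (1 - θ) + (1 + θ) * Real.log (1 + θ))
      ≥ (2 * π₁ + π₂) / 4 * θ ^ 2 := by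
  have hθ1 : |θ| ≤ 1 := abs_le.mpr ⟨by linarith [hθ.1], hθ.2⟩
  have hsq : θ ^ 2 ≤ 1 := (sq_le_one_iff_abs_le_one θ).mpr hθ1
  have hsqrt := sqrt_one_sub_le_one_sub_half (x := θ ^ 2) (by linarith)
  have hent := sq_le_mul_log_one_sub_add_mul_log_one_add hθ1
  linarith [mul_le_mul_of_nonneg_left hsqrt h1.le, mul_le_mul_of_nonneg_left hent h2.le,
    mul_nonneg h2.le (sq_nonneg θ)]

theorem psi_quadratic_lower_bound (π₁ π₂ : ℝ) (h1 : 0 < π₁) (h2 : 0 < π₂)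
    (hsum : π₁ + π₂ = 1) (θ : ℝ) (hθ : θ ∈ Set.Icc (0 : ℝ) 1) :
    π₁ * (1 - Real.sqrt (1 - θ ^ 2)) +
      π₂ / 2 * ((1 - θ) * Real.log (1 - θ) + (1 + θ) * Real.log (1 + θ))
      ≥ (2 * π₁ + π₂) / 4 * θ ^ 2 :=
  psi_quadratic_lower_bound_general π₁ π₂ h1 h2 θ hθ
end
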